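/- arXiv:2211.04871 — 2 statements merged into one kernel-verified Lean document; each statement's English description precedes it below -/
import Mathlib

section
/- If a word w over [n] with A(w) = [n] 12-represents a labeled graph G, then G contains no induced subgraph on four vertices a < b < c < d whose only edges are ac and bd (the pattern J_4). -/
/-- The subword of `w` consisting of the occurrences of `x` and `y`. -/
def subw {n : ℕ} (w : List (Fin n)) (x y : Fin n) : List (Fin n) :=
  w.filter fun a => decide (a = x ∨ a = y)

/-- A word has a 12-match if some letter is immediately followed by a strictly larger one. -/
def Has12 {n : ℕ} (s : List (Fin n)) : Prop :=
  ∃ a b : Fin n, a < b ∧ [a, b] <:+: s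

/-- `w` 12-represents the labeled graph `G` on `Fin n`. -/
def Rep12 {n : ℕ} (w : List (Fin n)) (G : SimpleGraph (Fin n)) : Prop :=
  (∀ i : Fin n, i ∈ w) ∧
  ∀ x y : Fin n, x ≠ y → (G.Adj x y ↔ ¬ Has12 (subw w x y))

/-- A graph is 12-representable if some labeling of its vertices admits a 12-representant. -/
def Rep12able {V : Type} [Fintype V] (G : SimpleGraph V) : Prop :=
  ∃ (f : V ≃ Fin (Fintype.card V)) (w : List (Fin (Fintype.card V))),
    Rep12 w (G.map f.toEmbedding)

/-!
In a word, `x < y` span a non-edge exactly when some `x` occurs before some `y`, because a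
word over `{x, y}` without the factor `xy` is weakly decreasing. A non-edge `ad` and a non-edge
`bc` give occurrences `a … d` and `b … c`; whichever of `c`, `d` comes later is preceded by both
`a` and `b`, so `ac` or `bd` is a non-edge as well.
-/

open List

theorem List.pair_sublist_or_pair_sublist {α : Type*} {a b c d : α} {l : List α}
    (had : [a, d] <+ l) (hbc : [b, c] <+ l) : [a, c] <+ l ∨ [b, d] <+ l := by
  induction l with
  | nil => simp at had
  | cons x t ih =>
    rcases cons_sublist_cons'.mp had with had' | ⟨rfl, -⟩
    · rcases cons_sublist_cons'.mp hbc with hbc' | ⟨rfl, -⟩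
      · exact (ih had' hbc').imp (Sublist.cons x) (Sublist.cons x)
      · exact .inr (cons_sublist_cons.mpr (had'.subset (by simp) |> singleton_sublist.mpr))
    · have hc : c ∈ t := by
        rcases cons_sublist_cons'.mp hbc with hbc' | ⟨-, hc⟩
        · exact hbc'.subset (by simp)
        · exact singleton_sublist.mp hc
      exact .inl (cons_sublist_cons.mpr (singleton_sublist.mpr hc))

section LinearOrder

variable {α : Type*} [LinearOrder α]

theorem List.not_exists_lt_infix_iff_isChain_ge {s : List α} :
    (¬ ∃ a b, a < b ∧ [a, b] <:+: s) ↔ s.IsChain (· ≥ ·) := by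
  rw [isChain_iff_forall_rel_of_append_cons_cons]
  constructor
  · rintro h a b l₁ l₂ rfl
    exact not_lt.mp fun hab => h ⟨a, b, hab, l₁, l₂, by simp⟩
  · rintro h ⟨a, b, hab, l₁, l₂, rfl⟩
    exact (h (l₁ := l₁) (l₂ := l₂) (by simp)).not_gt hab

theorem List.exists_lt_infix_iff_exists_lt_sublist {s : List α} :
    (∃ a b, a < b ∧ [a, b] <:+: s) ↔ ∃ a b, a < b ∧ [a, b] <+ s := by
  rw [← not_iff_not, not_exists_lt_infix_iff_isChain_ge, isChain_iff_pairwise,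
    pairwise_iff_forall_sublist]
  simp only [not_exists, not_and]
  exact ⟨fun h a b hab hs => (h hs).not_gt hab, fun h a b hs => not_lt.mp fun hab => h a b hab hs⟩

end LinearOrder

theorem has12_subw_iff {n : ℕ} (w : List (Fin n)) {x y : Fin n} (hxy : x < y) :
    Has12 (subw w x y) ↔ [x, y] <+ w := by
  rw [Has12, exists_lt_infix_iff_exists_lt_sublist]
  constructor
  · rintro ⟨p, q, hpq, hsub⟩
    have hp : p = x ∨ p = y := by simpa using (mem_filter.mp (hsub.subset (by simp))).2
    have hq : q = x ∨ q = y := by simpa using (mem_filter.mp (hsub.subset (by simp))).2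
    obtain ⟨rfl, rfl⟩ : p = x ∧ q = y := by
      rcases hp with rfl | rfl <;> rcases hq with rfl | rfl <;> simp_all [lt_asymm hxy]
    exact hsub.trans filter_sublist
  · intro h
    exact ⟨x, y, hxy, by simpa [subw] using h.filter fun a => decide (a = x ∨ a = y)⟩

theorem Rep12.not_adj_iff {n : ℕ} {w : List (Fin n)} {G : SimpleGraph (Fin n)}
    (hw : Rep12 w G) {x y : Fin n} (hxy : x < y) : ¬ G.Adj x y ↔ [x, y] <+ w := by
  rw [hw.2 x y hxy.ne, not_not, has12_subw_iff w hxy]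

theorem no_J4_of_rep12_general {n : ℕ} (w : List (Fin n)) (G : SimpleGraph (Fin n))
    (hw : Rep12 w G) (a b c d : Fin n) (hab : a < b) (hbc : b < c) (hcd : c < d)
    (eac : G.Adj a c) (ebd : G.Adj b d)
    (nad : ¬ G.Adj a d) (nbc : ¬ G.Adj b c) :
    False := by
  have hac := hab.trans hbc
  have hbd := hbc.trans hcd
  rcases pair_sublist_or_pair_sublist ((hw.not_adj_iff (hac.trans hcd)).mp nad)
      ((hw.not_adj_iff hbc).mp nbc) with hAC | hBD
  · exact (hw.not_adj_iff hac).mpr hAC eac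
  · exact (hw.not_adj_iff hbd).mpr hBD ebd

/-- A 12-representable labeled graph contains no induced copy of $J_4$:
four vertices $a<b<c<d$ whose only edges are $ac$ and $bd$. -/
theorem no_J4_of_rep12 {n : ℕ} (w : List (Fin n)) (G : SimpleGraph (Fin n))
    (hw : Rep12 w G) (a b c d : Fin n) (hab : a < b) (hbc : b < c) (hcd : c < d)
    (eac : G.Adj a c) (ebd : G.Adj b d)
    (nab : ¬ G.Adj a b) (nad : ¬ G.Adj a d) (nbc : ¬ G.Adj b c) (ncd : ¬ G.Adj c d) :
    False :=
  no_J4_of_rep12_general w G hw a b c d hab hbc hcd eac ebd nad nbc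
end

section
/- Every co-interval graph is 12-representable: let G be a graph on [n] with intervals I_v = [ℓ_v, r_v] (all endpoints distinct) such that xy ∈ E(G) iff I_x ∩ I_y = ∅, with vertices labeled by increasing left endpoint. Then the word w listing, for all 2n endpoints from right to left, the label of the interval owning that endpoint, is a 12-representant of G. -/
/-!
Two intervals `I_x, I_y` with `x < y` (so `ℓ x < ℓ y`) are in one of three positions, and
reading their four endpoints from right to left gives the subword `yyxx` when they are
disjoint, `yxyx` when they cross and `xyyx` when `I_y` is nested in `I_x`. A word avoids the
pattern 12 exactly when it is weakly decreasing, which among these three holds only for `yyxx`.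
-/

theorem List.eq_of_mem_iff_of_pairwise_gt {α β : Type*} [Preorder β] {f : α → β}
    {l₁ l₂ : List α} (h₁ : (l₁.map f).Pairwise (· > ·)) (h₂ : (l₂.map f).Pairwise (· > ·))
    (h : ∀ a, a ∈ l₁ ↔ a ∈ l₂) : l₁ = l₂ := by
  let R : α → α → Prop := fun a b => f a > f b
  have : Std.Antisymm R := ⟨fun _ _ hab hba => (lt_asymm hab hba).elim⟩
  have : Std.Irrefl R := ⟨fun a => lt_irrefl (f a)⟩
  exact Subset.antisymm_of_pairwise (r := R) (pairwise_map.mp h₁) (pairwise_map.mp h₂)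
    (fun a => (h a).mp) (fun a => (h a).mpr)

theorem has12_iff_not_isChain {n : ℕ} {s : List (Fin n)} :
    Has12 s ↔ ¬ s.IsChain (· ≥ ·) := by
  simp only [List.isChain_iff_forall_rel_of_append_cons_cons, not_forall, not_le, exists_prop]
  constructor
  · rintro ⟨a, b, hab, s₁, s₂, rfl⟩
    exact ⟨a, b, s₁, s₂, by simp, hab⟩
  · rintro ⟨a, b, s₁, s₂, rfl, hab⟩
    exact ⟨a, b, hab, s₁, s₂, by simp⟩

theorem subw_comm {n : ℕ} (w : List (Fin n)) (x y : Fin n) : subw w x y = subw w y x := by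
  simp only [subw, or_comm]

theorem Set.Icc_inter_Icc_eq_empty_iff_of_le {α : Type*} [LinearOrder α] {a₁ b₁ a₂ b₂ : α}
    (ha : a₁ ≤ a₂) (h₂ : a₂ ≤ b₂) : Icc a₁ b₁ ∩ Icc a₂ b₂ = ∅ ↔ b₁ < a₂ := by
  rw [Icc_inter_Icc, max_eq_right ha, Icc_eq_empty_iff, le_min_iff]
  simp [h₂]

section CoInterval

variable {n : ℕ} {ℓ r : Fin n → ℝ} {ps : List (ℝ × Fin n)}

theorem subw_eq_of_sorted_endpoints (hsort : (ps.map Prod.fst).Pairwise (· > ·))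
    (hperm : ps.Perm ((List.finRange n).flatMap fun v => [(ℓ v, v), (r v, v)]))
    {x y : Fin n} {s : List (ℝ × Fin n)}
    (hs : (s.map Prod.fst).Pairwise (· > ·))
    (hmem : ∀ p, p ∈ s ↔ p ∈ [(ℓ x, x), (r x, x), (ℓ y, y), (r y, y)]) :
    subw (ps.map Prod.snd) x y = s.map Prod.snd := by
  rw [subw, List.filter_map]
  congr 1
  refine List.eq_of_mem_iff_of_pairwise_gt (f := Prod.fst)
    (List.pairwise_map.mpr ((List.pairwise_map.mp hsort).filter _)) hs fun p => ?_
  rw [hmem, List.mem_filter, hperm.mem_iff]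
  obtain ⟨a, v⟩ := p
  simp only [List.mem_flatMap, List.mem_finRange, List.mem_cons, List.not_mem_nil,
    Prod.mk.injEq, true_and, Function.comp_apply, decide_eq_true_eq, or_false]
  grind

theorem adj_iff_not_has12_of_lt (G : SimpleGraph (Fin n))
    (hlr : ∀ v, ℓ v < r v) (hmono : StrictMono ℓ) (hrinj : Function.Injective r)
    (hlne : ∀ u v, ℓ u ≠ r v)
    (hadj : ∀ x y : Fin n, x ≠ y →
      (G.Adj x y ↔ Set.Icc (ℓ x) (r x) ∩ Set.Icc (ℓ y) (r y) = ∅))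
    (hsort : (ps.map Prod.fst).Pairwise (· > ·))
    (hperm : ps.Perm ((List.finRange n).flatMap fun v => [(ℓ v, v), (r v, v)]))
    {x y : Fin n} (hxy : x < y) :
    G.Adj x y ↔ ¬ Has12 (subw (ps.map Prod.snd) x y) := by
  have hℓ : ℓ x < ℓ y := hmono hxy
  have hx := hlr x
  have hy := hlr y
  rw [hadj x y hxy.ne, Set.Icc_inter_Icc_eq_empty_iff_of_le hℓ.le hy.le, has12_iff_not_isChain,
    not_not]
  rcases (hlne y x).lt_or_gt with hmeet | hdisj
  · rcases (hrinj.ne hxy.ne).lt_or_gt with hcross | hnest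
    · rw [subw_eq_of_sorted_endpoints hsort hperm (s := [(r y, y), (r x, x), (ℓ y, y), (ℓ x, x)])
        (by simp; grind) (by simp; tauto)]
      simp [hmeet.not_gt, hxy.not_ge]
    · rw [subw_eq_of_sorted_endpoints hsort hperm (s := [(r x, x), (r y, y), (ℓ y, y), (ℓ x, x)])
        (by simp; grind) (by simp; tauto)]
      simp [hmeet.not_gt, hxy.not_ge]
  · rw [subw_eq_of_sorted_endpoints hsort hperm (s := [(r y, y), (ℓ y, y), (r x, x), (ℓ x, x)])
      (by simp; grind) (by simp; tauto)]
    simp [hdisj, hxy.le]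

end CoInterval

/-- Every co-interval graph is 12-representable: with intervals `[ℓ v, r v]` (all
endpoints distinct), adjacency = disjointness, and vertices labeled by increasing
left endpoint (`ℓ` strictly monotone), the word listing the owners of all `2n`
endpoints from right to left 12-represents `G`. -/
theorem rep12_of_coInterval {n : ℕ} (G : SimpleGraph (Fin n))
    (ℓ r : Fin n → ℝ)
    (hlr : ∀ v, ℓ v < r v)
    (hmono : StrictMono ℓ)
    (hrinj : Function.Injective r)
    (hlne : ∀ u v, ℓ u ≠ r v)
    (hadj : ∀ x y : Fin n, x ≠ y →
      (G.Adj x y ↔ Set.Icc (ℓ x) (r x) ∩ Set.Icc (ℓ y) (r y) = ∅))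
    (ps : List (ℝ × Fin n))
    (hsort : (ps.map Prod.fst).Pairwise (· > ·))
    (hperm : ps.Perm ((List.finRange n).flatMap fun v => [(ℓ v, v), (r v, v)])) :
    Rep12 (ps.map Prod.snd) G := by
  refine ⟨fun i => List.mem_map.mpr ⟨(ℓ i, i), hperm.mem_iff.mpr
    (List.mem_flatMap.mpr ⟨i, List.mem_finRange i, by simp⟩), rfl⟩,
    fun x y hne => ?_⟩
  rcases hne.lt_or_gt with hxy | hyx
  · exact adj_iff_not_has12_of_lt G hlr hmono hrinj hlne hadj hsort hperm hxy
  · rw [G.adj_comm, subw_comm]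
    exact adj_iff_not_has12_of_lt G hlr hmono hrinj hlne hadj hsort hperm hyx
end
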